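/- For m ≥ 2 and k ≥ 0, c(k,m) = 2^{m-1} · binom(k+m-2, m-2) equals the dimension of the space MT_k^{(0,0,n)} with n = ⌊m/2⌋ of homogeneous polynomial solutions of degree k of the Dirac-type system (d+d*)P = 0 for even-degree form valued polynomials P ∈ ⊕_{j=0}^n P_k^{2j}. -/

import Mathlib

open MvPolynomial

/-- Mixed polynomial differential forms on ℝ^m: one polynomial coefficient for each
increasing multi-index (i.e. each subset of the coordinates). -/
abbrev MixedForm (m : ℕ) := Finset (Fin m) → MvPolynomial (Fin m) ℝ

/-- The sign `(-1)^{#{j ∈ B : j < i}}`. -/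
noncomputable def fsgn {m : ℕ} (i : Fin m) (B : Finset (Fin m)) : ℝ :=
  (-1 : ℝ) ^ (B.filter (fun j => j < i)).card

/-- The exterior derivative on polynomial forms. -/
noncomputable def extD (m : ℕ) : MixedForm m →ₗ[ℝ] MixedForm m :=
  LinearMap.pi fun B => ∑ i ∈ B, fsgn i B •
    ((pderiv i).toLinearMap ∘ₗ LinearMap.proj (B.erase i))

/-- The codifferential (formal adjoint of the exterior derivative) on polynomial forms. -/
noncomputable def coD (m : ℕ) : MixedForm m →ₗ[ℝ] MixedForm m :=
  LinearMap.pi fun B => ∑ i ∈ Bᶜ, fsgn i B •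
    ((pderiv i).toLinearMap ∘ₗ LinearMap.proj (insert i B))

/-- Forms all of whose coefficients are homogeneous polynomials of degree `k`. -/
noncomputable def Homog (m k : ℕ) : Submodule ℝ (MixedForm m) where
  carrier := {P | ∀ B, (P B).IsHomogeneous k}
  add_mem' := fun ha hb B => (ha B).add (hb B)
  zero_mem' := fun B => isHomogeneous_zero _ _ _
  smul_mem' := by
    intro c P h B
    have h2 : (c • P) B = (C c : MvPolynomial (Fin m) ℝ) * P B := by
      simp [smul_eq_C_mul]
    rw [h2]
    simpa using (isHomogeneous_C (Fin m) c).mul (h B)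

/-- Forms supported in form-degrees belonging to the set `S`. -/
noncomputable def DegSupp (m : ℕ) (S : Set ℕ) : Submodule ℝ (MixedForm m) where
  carrier := {P | ∀ B : Finset (Fin m), B.card ∉ S → P B = 0}
  add_mem' := by intro a b ha hb B hB; simp [ha B hB, hb B hB]
  zero_mem' := by intro B hB; rfl
  smul_mem' := by intro c a ha B hB; simp [ha B hB]

/-- Homogeneity-`k` polynomial solutions of the Hodge–de Rham system in form-degree `s`. -/
noncomputable def Hsp (m k s : ℕ) : Submodule ℝ (MixedForm m) :=
  Homog m k ⊓ DegSupp m {s} ⊓ LinearMap.ker (extD m) ⊓ LinearMap.ker (coD m)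

/-- Homogeneity-`k` polynomial solutions of the generalized Moisil–Théodoresco system
of type `(r,p,q)`. -/
noncomputable def MTsp (m k r p q : ℕ) : Submodule ℝ (MixedForm m) :=
  Homog m k ⊓ DegSupp m {t | ∃ j, p ≤ j ∧ j ≤ q ∧ t = r + 2 * j} ⊓
    LinearMap.ker (extD m + coD m)

/-- The Hodge Laplacian `Δ = d d* + d* d`. -/
noncomputable def hodgeLap (m : ℕ) : MixedForm m →ₗ[ℝ] MixedForm m :=
  extD m ∘ₗ coD m + coD m ∘ₗ extD m

/-- Harmonic `s`-forms with homogeneous polynomial coefficients of degree `k`. -/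
noncomputable def KerDelta (m k s : ℕ) : Submodule ℝ (MixedForm m) :=
  Homog m k ⊓ DegSupp m {s} ⊓ LinearMap.ker (hodgeLap m)

/-- Multiplication of all coefficients by `r^{2j} = (x_1^2 + ⋯ + x_m^2)^j`. -/
noncomputable def mulRpow (m j : ℕ) : MixedForm m →ₗ[ℝ] MixedForm m :=
  LinearMap.pi fun B =>
    (LinearMap.mulLeft ℝ ((∑ i, X i ^ 2 : MvPolynomial (Fin m) ℝ) ^ j)) ∘ₗ
      LinearMap.proj B

/-- The dimension `d(k,m,s)` of the space of homogeneity-`k` polynomial solutions of the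
Hodge–de Rham system in degree `s`, with the conventions `d(k,m,s) = 0` for `k < 0` or
`s ∉ [0,m]`, `d(0,m,0) = d(0,m,m) = 1` and `d(k,m,0) = d(k,m,m) = 0` for `k ≥ 1`. -/
noncomputable def dHR (m : ℕ) (k s : ℤ) : ℚ :=
  if k < 0 ∨ s < 0 ∨ (m : ℤ) < s then 0
  else if s = 0 ∨ s = m then (if k = 0 then 1 else 0)
  else ((m - 2).choose (s.toNat - 1) : ℚ) * ((k.toNat + m - 2).choose (m - 2) : ℚ) *
    ((2 * (k : ℚ) + m) * ((k : ℚ) + m - 1)) / (((k : ℚ) + s) * ((k : ℚ) + m - s))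

/-- The dimension of the space of homogeneous polynomials of degree `k` on ℝ^m
(zero for negative `k`). -/
noncomputable def pdim (m : ℕ) (k : ℤ) : ℚ :=
  if k < 0 then 0 else ((k.toNat + m - 1).choose (m - 1) : ℚ)

/-- The subspace of `s`-forms with homogeneous polynomial coefficients of degree `k`
lying in the kernel of the operator `T`. -/
noncomputable def Kof (m k s : ℕ) (T : MixedForm m →ₗ[ℝ] MixedForm m) :
    Submodule ℝ (MixedForm m) :=
  Homog m k ⊓ DegSupp m {s} ⊓ LinearMap.ker T
namespace MTproof

open MvPolynomial

variable {m : ℕ}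

/-- Toggle membership of `i` in `B`. -/
def tog (i : Fin m) (B : Finset (Fin m)) : Finset (Fin m) :=
  if i ∈ B then B.erase i else insert i B

lemma tog_tog (i : Fin m) (B : Finset (Fin m)) : tog i (tog i B) = B := by
  unfold tog
  by_cases h : i ∈ B
  · simp [h, Finset.insert_erase h]
  · simp [h, Finset.erase_insert h]

lemma mem_tog {x i : Fin m} {B : Finset (Fin m)} :
    x ∈ tog i B ↔ (if x = i then i ∉ B else x ∈ B) := by
  unfold tog
  by_cases h : i ∈ B <;> by_cases hx : x = i <;>
    simp [h, hx, Finset.mem_erase, Finset.mem_insert]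

lemma tog_comm {i j : Fin m} (h : i ≠ j) (B : Finset (Fin m)) :
    tog i (tog j B) = tog j (tog i B) := by
  ext x
  by_cases hxi : x = i <;> by_cases hxj : x = j <;>
    simp [mem_tog, hxi, hxj, h, h.symm, Ne.symm]

lemma card_tog (i : Fin m) (B : Finset (Fin m)) :
    ¬ Even ((tog i B).card + B.card) := by
  rw [Nat.even_iff]
  unfold tog
  by_cases h : i ∈ B
  · have h1 : 1 ≤ B.card := Finset.card_pos.mpr ⟨i, h⟩
    simp only [h, if_true, Finset.card_erase_of_mem h]
    omega
  · simp only [h, if_false, Finset.card_insert_of_notMem h]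
    omega

lemma even_card_tog_iff (i : Fin m) (B : Finset (Fin m)) :
    Even ((tog i B).card) ↔ ¬ Even B.card := by
  have := card_tog i B
  rcases Nat.even_or_odd (tog i B).card with h | h <;>
    rcases Nat.even_or_odd B.card with h2 | h2 <;>
      simp_all [Nat.even_add, Nat.odd_iff, Nat.even_iff] <;> omega

lemma neg_one_pow_sub_one {n : ℕ} (h : 1 ≤ n) : (-1 : ℝ) ^ (n - 1) = -(-1 : ℝ) ^ n := by
  cases n with
  | zero => omega
  | succ n => simp [pow_succ]

lemma fsgn_sq (i : Fin m) (B : Finset (Fin m)) : fsgn i B * fsgn i B = 1 := by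
  unfold fsgn
  rw [← pow_add, ← two_mul, pow_mul]
  norm_num

lemma fsgn_tog_self (i : Fin m) (B : Finset (Fin m)) : fsgn i (tog i B) = fsgn i B := by
  unfold fsgn tog
  by_cases h : i ∈ B
  · simp only [h, if_true, Finset.filter_erase]
    rw [Finset.erase_eq_of_notMem]
    simp [lt_irrefl]
  · simp only [h, if_false, Finset.filter_insert]
    rw [if_neg (by simp [lt_irrefl])]

lemma fsgn_tog_of_lt {i j : Fin m} (h : j < i) (B : Finset (Fin m)) :
    fsgn i (tog j B) = - fsgn i B := by
  unfold fsgn tog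
  by_cases hj : j ∈ B
  · simp only [hj, if_true, Finset.filter_erase]
    have hjf : j ∈ B.filter (fun x => x < i) := Finset.mem_filter.mpr ⟨hj, h⟩
    rw [Finset.card_erase_of_mem hjf]
    exact neg_one_pow_sub_one (Finset.card_pos.mpr ⟨j, hjf⟩)
  · simp only [hj, if_false, Finset.filter_insert, if_pos h]
    rw [Finset.card_insert_of_notMem (by simp [hj])]
    rw [pow_succ]
    ring

lemma fsgn_tog_of_not_lt {i j : Fin m} (h : ¬ j < i) (B : Finset (Fin m)) :
    fsgn i (tog j B) = fsgn i B := by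
  unfold fsgn tog
  by_cases hj : j ∈ B
  · simp only [hj, if_true, Finset.filter_erase]
    rw [Finset.erase_eq_of_notMem]
    simp [h]
  · simp only [hj, if_false, Finset.filter_insert, if_neg h]

/-- The `i`-th Clifford generator acting on mixed forms. -/
noncomputable def Cl (m : ℕ) (i : Fin m) : MixedForm m →ₗ[ℝ] MixedForm m :=
  LinearMap.pi fun B => fsgn i B • LinearMap.proj (tog i B)

/-- Componentwise partial derivative. -/
noncomputable def Pd (m : ℕ) (i : Fin m) : MixedForm m →ₗ[ℝ] MixedForm m :=
  LinearMap.pi fun B => (pderiv i).toLinearMap ∘ₗ LinearMap.proj B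

/-- Componentwise multiplication by `X i`. -/
noncomputable def Xm (m : ℕ) (i : Fin m) : MixedForm m →ₗ[ℝ] MixedForm m :=
  LinearMap.pi fun B => (LinearMap.mulLeft ℝ (X i)) ∘ₗ LinearMap.proj B

@[simp] lemma Cl_apply (i : Fin m) (P : MixedForm m) (B : Finset (Fin m)) :
    Cl m i P B = fsgn i B • P (tog i B) := rfl

@[simp] lemma Pd_apply (i : Fin m) (P : MixedForm m) (B : Finset (Fin m)) :
    Pd m i P B = pderiv i (P B) := rfl

@[simp] lemma Xm_apply (i : Fin m) (P : MixedForm m) (B : Finset (Fin m)) :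
    Xm m i P B = X i * P B := rfl

/-- The Dirac operator. -/
noncomputable def Dop (m : ℕ) : MixedForm m →ₗ[ℝ] MixedForm m :=
  ∑ i, Pd m i ∘ₗ Cl m i

/-- The vector variable (Clifford multiplication by `x`). -/
noncomputable def Xop (m : ℕ) : MixedForm m →ₗ[ℝ] MixedForm m :=
  ∑ i, Xm m i ∘ₗ Cl m i

lemma Dop_apply (P : MixedForm m) (B : Finset (Fin m)) :
    Dop m P B = ∑ i, fsgn i B • pderiv i (P (tog i B)) := by
  simp [Dop, LinearMap.sum_apply, Finset.sum_apply, map_smul]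

lemma Xop_apply (P : MixedForm m) (B : Finset (Fin m)) :
    Xop m P B = ∑ i, fsgn i B • (X i * P (tog i B)) := by
  simp [Xop, LinearMap.sum_apply, Finset.sum_apply, Finset.smul_sum, mul_smul_comm]

lemma extD_coD_eq_Dop : extD m + coD m = Dop m := by
  refine LinearMap.ext fun P => funext fun B => ?_
  rw [LinearMap.add_apply, Pi.add_apply, Dop_apply]
  have hsplit : (Finset.univ : Finset (Fin m)) = B ∪ Bᶜ := by
    simp [Finset.union_compl]
  rw [hsplit, Finset.sum_union (disjoint_compl_right)]
  congr 1
  · simp only [extD, LinearMap.pi_apply, LinearMap.sum_apply, LinearMap.smul_apply,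
      LinearMap.comp_apply, LinearMap.proj_apply]
    refine Finset.sum_congr rfl fun i hi => ?_
    simp [tog, hi]
  · simp only [coD, LinearMap.pi_apply, LinearMap.sum_apply, LinearMap.smul_apply,
      LinearMap.comp_apply, LinearMap.proj_apply]
    refine Finset.sum_congr rfl fun i hi => ?_
    have : i ∉ B := by simpa using hi
    simp [tog, this]

end MTproof
namespace MTproof
open MvPolynomial
variable {m : ℕ}

lemma Cl_Cl_self (i : Fin m) (P : MixedForm m) : Cl m i (Cl m i P) = P := by
  funext B
  simp only [Cl_apply, fsgn_tog_self, tog_tog, smul_smul, fsgn_sq, one_smul]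

lemma fsgn_anticomm {i j : Fin m} (h : i ≠ j) (B : Finset (Fin m)) :
    fsgn i B * fsgn j (tog i B) = -(fsgn j B * fsgn i (tog j B)) := by
  rcases lt_or_gt_of_ne h with hlt | hlt
  · rw [fsgn_tog_of_lt hlt, fsgn_tog_of_not_lt (not_lt_of_gt hlt)]
    ring
  · rw [fsgn_tog_of_not_lt (not_lt_of_gt hlt), fsgn_tog_of_lt hlt]
    ring

lemma Cl_anticomm {i j : Fin m} (h : i ≠ j) (P : MixedForm m) :
    Cl m i (Cl m j P) = - Cl m j (Cl m i P) := by
  funext B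
  simp only [Cl_apply, Pi.neg_apply, smul_smul, tog_comm h.symm B]
  rw [mul_comm (fsgn i B), fsgn_anticomm (Ne.symm h) B]
  simp [mul_comm]

lemma Pd_Cl (i j : Fin m) (P : MixedForm m) : Pd m i (Cl m j P) = Cl m j (Pd m i P) := by
  funext B
  simp [map_smul]

lemma Xm_Cl (i j : Fin m) (P : MixedForm m) : Xm m i (Cl m j P) = Cl m j (Xm m i P) := by
  funext B
  simp [mul_smul_comm]

lemma Pd_Xm (i j : Fin m) (P : MixedForm m) :
    Pd m i (Xm m j P) = (if i = j then P else 0) + Xm m j (Pd m i P) := by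
  funext B
  simp only [Pd_apply, Xm_apply, Pi.add_apply, pderiv_mul]
  by_cases h : i = j
  · subst h
    simp [pderiv_X_self]
  · rw [pderiv_X_of_ne (Ne.symm h), if_neg h]
    simp

/-- Euler's identity for homogeneous polynomials. -/
lemma euler {k : ℕ} {p : MvPolynomial (Fin m) ℝ} (hp : p.IsHomogeneous k) :
    ∑ i, X i * pderiv i p = k • p := by
  conv_lhs => rw [p.as_sum]
  conv_rhs => rw [p.as_sum]
  rw [Finset.smul_sum]
  simp_rw [map_sum, Finset.mul_sum]
  rw [Finset.sum_comm]
  refine Finset.sum_congr rfl fun v hv => ?_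
  have hdeg : v.degree = k := by
    rw [Finsupp.degree_eq_weight_one]; exact hp (MvPolynomial.mem_support_iff.mp hv)
  have hterm : ∀ i : Fin m, X i * pderiv i (monomial v (coeff v p)) =
      monomial v ((v i : ℝ) * coeff v p) := by
    intro i
    rw [pderiv_monomial]
    by_cases h : v i = 0
    · simp [h]
    · have hv' : v - Finsupp.single i 1 + Finsupp.single i 1 = v := by
        ext j
        simp only [Finsupp.add_apply, Finsupp.tsub_apply, Finsupp.single_apply]
        split_ifs with hj
        · subst hj; omega
        · omega
      rw [X, monomial_mul, one_mul, add_comm, hv', mul_comm]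
  simp_rw [hterm]
  rw [← map_sum, ← Finset.sum_mul]
  have hsum : ∑ i : Fin m, (v i : ℝ) = (k : ℝ) := by
    rw [← Nat.cast_sum]
    norm_cast
    rw [← hdeg, Finsupp.degree]
    exact (Finset.sum_subset (Finset.subset_univ _) (by
      intro x _ hx
      simpa using Finsupp.notMem_support_iff.mp hx)).symm
  rw [hsum]
  simp [MvPolynomial.smul_monomial]

lemma IsHomog.pderiv' {k : ℕ} {p : MvPolynomial (Fin m) ℝ} (i : Fin m)
    (hp : p.IsHomogeneous k) : (pderiv i p).IsHomogeneous (k - 1) := by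
  rw [p.as_sum, map_sum]
  apply IsHomogeneous.sum
  intro v hv
  have hdeg : v.degree = k := by
    rw [Finsupp.degree_eq_weight_one]; exact hp (MvPolynomial.mem_support_iff.mp hv)
  rw [pderiv_monomial]
  by_cases h : v i = 0
  · simp only [h, Nat.cast_zero, mul_zero, map_zero]
    exact isHomogeneous_zero _ _ _
  · have hv' : v - Finsupp.single i 1 + Finsupp.single i 1 = v := by
      ext j
      simp only [Finsupp.add_apply, Finsupp.tsub_apply, Finsupp.single_apply]
      split_ifs with hj
      · subst hj; omega
      · omega
    apply isHomogeneous_monomial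
    have h1 : (Finsupp.single i 1 : Fin m →₀ ℕ).degree = 1 := by
      exact Finsupp.degree_single _ _
    have h2 : (v - Finsupp.single i 1).degree + (Finsupp.single i 1 : Fin m →₀ ℕ).degree
        = v.degree := by
      simp only [Finsupp.degree_eq_weight_one]
      rw [← map_add, hv']
    omega

/-- pderiv of a degree-zero homogeneous polynomial vanishes. -/
lemma pderiv_of_homog_zero {p : MvPolynomial (Fin m) ℝ} (i : Fin m)
    (hp : p.IsHomogeneous 0) : pderiv i p = 0 := by
  rw [p.as_sum, map_sum]
  apply Finset.sum_eq_zero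
  intro v hv
  have hdeg : v.degree = 0 := by
    rw [Finsupp.degree_eq_weight_one]; exact hp (MvPolynomial.mem_support_iff.mp hv)
  have hv0 : v i = 0 := by
    have : v = 0 := (Finsupp.degree_eq_zero_iff v).mp hdeg
    simp [this]
  rw [pderiv_monomial, hv0]
  simp

end MTproof
namespace MTproof
open MvPolynomial
variable {m : ℕ}

lemma Dop_eq_sum (Q : MixedForm m) : Dop m Q = ∑ i, Pd m i (Cl m i Q) := by
  simp [Dop, LinearMap.sum_apply]

lemma Xop_eq_sum (Q : MixedForm m) : Xop m Q = ∑ i, Xm m i (Cl m i Q) := by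
  simp [Xop, LinearMap.sum_apply]

lemma sum_Xm_Pd (k : ℕ) (P : MixedForm m) (hP : ∀ B, (P B).IsHomogeneous k) :
    ∑ i, Xm m i (Pd m i P) = k • P := by
  funext B
  rw [Finset.sum_apply]
  simp only [Xm_apply, Pd_apply]
  rw [euler (hP B)]
  rfl

/-- The key anticommutation identity `D X + X D = m + 2 E`. -/
lemma key (k : ℕ) (P : MixedForm m) (hP : ∀ B, (P B).IsHomogeneous k) :
    Dop m (Xop m P) + Xop m (Dop m P) = (m + 2 * k) • P := by
  have hCC : ∀ i j : Fin m, Cl m i (Cl m j P) + Cl m j (Cl m i P)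
      = if i = j then P + P else 0 := by
    intro i j
    by_cases h : i = j
    · subst h
      rw [if_pos rfl, Cl_Cl_self]
    · rw [if_neg h, Cl_anticomm h]
      abel
  have e1 : Dop m (Xop m P) =
      ∑ i, ∑ j, ((if i = j then Cl m i (Cl m j P) else 0)
        + Xm m j (Pd m i (Cl m i (Cl m j P)))) := by
    rw [Xop_eq_sum, Dop_eq_sum]
    simp_rw [map_sum]
    refine Finset.sum_congr rfl fun i _ => Finset.sum_congr rfl fun j _ => ?_
    rw [← Xm_Cl j i (Cl m j P), Pd_Xm]
  have e2 : Xop m (Dop m P) =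
      ∑ i, ∑ j, Xm m j (Pd m i (Cl m j (Cl m i P))) := by
    rw [Dop_eq_sum, Xop_eq_sum]
    simp_rw [map_sum]
    rw [Finset.sum_comm]
    refine Finset.sum_congr rfl fun i _ => Finset.sum_congr rfl fun j _ => ?_
    rw [← Pd_Cl i j (Cl m i P)]
  rw [e1, e2, ← Finset.sum_add_distrib]
  simp_rw [← Finset.sum_add_distrib, add_assoc, ← map_add, hCC]
  have e3 : ∀ i : Fin m, ∑ j, ((if i = j then Cl m i (Cl m j P) else 0)
      + Xm m j (Pd m i (if i = j then P + P else 0)))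
      = P + Xm m i (Pd m i (P + P)) := by
    intro i
    rw [Finset.sum_add_distrib]
    congr 1
    · rw [Finset.sum_ite_eq (Finset.univ : Finset (Fin m)) i (fun j => Cl m i (Cl m j P))]
      simp [Cl_Cl_self]
    · rw [Finset.sum_eq_single i]
      · simp
      · intro j _ hj
        rw [if_neg (Ne.symm hj)]
        simp
      · simp
  simp_rw [e3]
  rw [Finset.sum_add_distrib]
  have e4 : ∑ _i : Fin m, P = m • P := by simp
  have e5 : ∑ i : Fin m, Xm m i (Pd m i (P + P)) = (2 * k) • P := by
    have : ∀ i : Fin m, Xm m i (Pd m i (P + P)) = Xm m i (Pd m i P) + Xm m i (Pd m i P) := by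
      intro i; rw [map_add, map_add]
    simp_rw [this]
    rw [Finset.sum_add_distrib, sum_Xm_Pd k P hP, ← add_nsmul, two_mul]
  rw [e4, e5, ← add_nsmul]

lemma Dop_homog {k : ℕ} {P : MixedForm m} (hP : ∀ B, (P B).IsHomogeneous k) :
    ∀ B, ((Dop m P) B).IsHomogeneous (k - 1) := by
  intro B
  rw [Dop_apply, ← mem_homogeneousSubmodule]
  refine Submodule.sum_mem _ fun i _ => Submodule.smul_mem _ _ ?_
  rw [mem_homogeneousSubmodule]
  exact IsHomog.pderiv' i (hP _)

lemma Xop_homog {k : ℕ} {P : MixedForm m} (hP : ∀ B, (P B).IsHomogeneous k) :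
    ∀ B, ((Xop m P) B).IsHomogeneous (k + 1) := by
  intro B
  rw [Xop_apply, ← mem_homogeneousSubmodule]
  refine Submodule.sum_mem _ fun i _ => Submodule.smul_mem _ _ ?_
  rw [mem_homogeneousSubmodule]
  have := (hP (tog i B)).mul (isHomogeneous_X ℝ i)
  simpa [mul_comm] using this

lemma smul_cancel {a : ℝ} (ha : a ≠ 0) {Q : MixedForm m} (h : a • Q = 0) : Q = 0 := by
  have := congrArg (fun z => a⁻¹ • z) h
  simpa [smul_smul, inv_mul_cancel₀ ha] using this

lemma key' (k : ℕ) (P : MixedForm m) (hP : ∀ B, (P B).IsHomogeneous k) :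
    Dop m (Xop m P) + Xop m (Dop m P) = ((m : ℝ) + 2 * k) • P := by
  have := key k P hP
  rw [← Nat.cast_smul_eq_nsmul ℝ] at this
  push_cast at this
  exact this

/-- Descending lemma: eigen-type relations force vanishing. -/
lemma desc (hm : 2 ≤ m) : ∀ (d : ℕ) (Q : MixedForm m), (∀ B, (Q B).IsHomogeneous d) →
    ∀ a : ℝ, (a < 0 ∨ ((m : ℝ) + 2 * d) ≤ a) → Xop m (Dop m Q) = a • Q → Q = 0 := by
  have hm2 : (2 : ℝ) ≤ (m : ℝ) := by exact_mod_cast hm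
  intro d
  induction d with
  | zero =>
    intro Q hQ a ha hEq
    have hD : Dop m Q = 0 := by
      funext B
      rw [Dop_apply]
      refine Finset.sum_eq_zero fun i _ => ?_
      rw [pderiv_of_homog_zero i (hQ _)]
      simp
    rw [hD, map_zero] at hEq
    have ha' : a ≠ 0 := by
      rcases ha with h | h
      · linarith
      · push_cast at h; nlinarith
    exact smul_cancel ha' hEq.symm
  | succ d ih =>
    intro Q hQ a ha hEq
    have hQ' : ∀ B, ((Dop m Q) B).IsHomogeneous d := by
      have := Dop_homog hQ
      simpa using this
    have hstep : Dop m (Xop m (Dop m Q)) = a • Dop m Q := by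
      rw [hEq, map_smul]
    have hkey := key' d (Dop m Q) hQ'
    have hXD : Xop m (Dop m (Dop m Q)) = (((m : ℝ) + 2 * d) - a) • Dop m Q := by
      rw [sub_smul, ← hkey, hstep]
      abel
    have hinv : (((m : ℝ) + 2 * d) - a) < 0 ∨ ((m : ℝ) + 2 * d) ≤ (((m : ℝ) + 2 * d) - a) := by
      rcases ha with h | h
      · right; linarith
      · left; push_cast at h; linarith
    have hD0 : Dop m Q = 0 := ih (Dop m Q) hQ' _ hinv hXD
    rw [hD0, map_zero] at hEq
    have ha' : a ≠ 0 := by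
      rcases ha with h | h
      · linarith
      · push_cast at h; nlinarith
    exact smul_cancel ha' hEq.symm

end MTproof
namespace MTproof
open MvPolynomial Module

variable {m : ℕ}

noncomputable def degEquivSym (m k : ℕ) :
    {d : Fin m →₀ ℕ // d.degree = k} ≃ Sym (Fin m) k :=
  (Equiv.subtypeEquivRight (q := fun d : Fin m →₀ ℕ => d.sum (fun _ => id) = k)
    (fun d => by simp [Finsupp.degree_apply, Finsupp.sum])).trans
    (Sym.equivNatSum (Fin m) k).symm

noncomputable instance (m k : ℕ) : Fintype {d : Fin m →₀ ℕ // d.degree = k} :=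
  Fintype.ofEquiv _ (degEquivSym m k).symm

lemma card_deg (m k : ℕ) :
    Fintype.card {d : Fin m →₀ ℕ // d.degree = k} = (m + k - 1).choose k := by
  rw [Fintype.card_congr (degEquivSym m k), Sym.card_sym_eq_choose]
  simp

noncomputable def homogEquiv (m k : ℕ) :
    ↥(homogeneousSubmodule (Fin m) ℝ k) ≃ₗ[ℝ] ({d : Fin m →₀ ℕ // d.degree = k} →₀ ℝ) :=
  (LinearEquiv.ofEq _ _ (homogeneousSubmodule_eq_finsupp_supported (Fin m) ℝ k)).trans
    (AddMonoidAlgebra.supportedEquivFinsupp _)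

instance (m k : ℕ) : Module.Finite ℝ ↥(homogeneousSubmodule (Fin m) ℝ k) :=
  Module.Finite.equiv (homogEquiv m k).symm

lemma finrank_homog (m k : ℕ) :
    finrank ℝ ↥(homogeneousSubmodule (Fin m) ℝ k) = (m + k - 1).choose k := by
  rw [(homogEquiv m k).finrank_eq, Module.finrank_finsupp_self, card_deg]

instance (m k : ℕ) : Module.Free ℝ ↥(homogeneousSubmodule (Fin m) ℝ k) :=
  Module.Free.of_divisionRing _ _

/-- Reassemble a family of homogeneous coefficients into a mixed form. -/
noncomputable def glue (m k : ℕ) (S : Set ℕ) [DecidablePred (· ∈ S)]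
    (f : {B : Finset (Fin m) // B.card ∈ S} → ↥(homogeneousSubmodule (Fin m) ℝ k)) :
    MixedForm m :=
  fun B => if h : B.card ∈ S then (f ⟨B, h⟩ : MvPolynomial (Fin m) ℝ) else 0

lemma glue_pos {m k : ℕ} {S : Set ℕ} [DecidablePred (· ∈ S)]
    {f : {B : Finset (Fin m) // B.card ∈ S} → ↥(homogeneousSubmodule (Fin m) ℝ k)}
    {B : Finset (Fin m)} (h : B.card ∈ S) : glue m k S f B = f ⟨B, h⟩ := dif_pos h

lemma glue_neg {m k : ℕ} {S : Set ℕ} [DecidablePred (· ∈ S)]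
    {f : {B : Finset (Fin m) // B.card ∈ S} → ↥(homogeneousSubmodule (Fin m) ℝ k)}
    {B : Finset (Fin m)} (h : B.card ∉ S) : glue m k S f B = 0 := dif_neg h

noncomputable def splitEquiv (m k : ℕ) (S : Set ℕ) [DecidablePred (· ∈ S)] :
    ↥(Homog m k ⊓ DegSupp m S) ≃ₗ[ℝ]
      ({B : Finset (Fin m) // B.card ∈ S} → ↥(homogeneousSubmodule (Fin m) ℝ k)) where
  toFun P := fun B => ⟨(P : MixedForm m) B.1, (Submodule.mem_inf.mp P.2).1 B.1⟩
  map_add' P Q := rfl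
  map_smul' c P := rfl
  invFun f := ⟨glue m k S f, by
    rw [Submodule.mem_inf]
    constructor
    · intro B
      by_cases h : B.card ∈ S
      · rw [glue_pos h]; exact (f ⟨B, h⟩).2
      · rw [glue_neg h]; exact isHomogeneous_zero _ _ _
    · intro B hB
      exact glue_neg hB⟩
  left_inv P := by
    apply Subtype.ext
    funext B
    show glue m k S (fun B => ⟨(P : MixedForm m) B.1, (Submodule.mem_inf.mp P.2).1 B.1⟩) B = (P : MixedForm m) B
    by_cases h : B.card ∈ S
    · exact glue_pos h
    · rw [glue_neg h]
      exact ((Submodule.mem_inf.mp P.2).2 B h).symm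
  right_inv f := by
    funext B
    apply Subtype.ext
    show glue m k S _ B.1 = _
    exact glue_pos B.2

instance (m k : ℕ) (S : Set ℕ) [DecidablePred (· ∈ S)] :
    Module.Finite ℝ ↥(Homog m k ⊓ DegSupp m S) :=
  Module.Finite.equiv (splitEquiv m k S).symm

lemma finrank_split (m k : ℕ) (S : Set ℕ) [DecidablePred (· ∈ S)] :
    finrank ℝ ↥(Homog m k ⊓ DegSupp m S) =
      Fintype.card {B : Finset (Fin m) // B.card ∈ S} * (m + k - 1).choose k := by
  rw [(splitEquiv m k S).finrank_eq, Module.finrank_pi_fintype]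
  simp [finrank_homog]

lemma DegSupp_univ (m : ℕ) : DegSupp m Set.univ = ⊤ := by
  ext P
  constructor
  · intro _; trivial
  · intro _ B hB
    exact absurd (Set.mem_univ _) hB

lemma Homog_eq_inf (m k : ℕ) : Homog m k = Homog m k ⊓ DegSupp m Set.univ := by
  rw [DegSupp_univ, inf_top_eq]

instance (m k : ℕ) : Module.Finite ℝ ↥(Homog m k) := by
  rw [Homog_eq_inf]
  infer_instance

/-- The toggle of the first coordinate as a parity-swapping equivalence. -/
noncomputable def parityEquiv (hm : 1 ≤ m) :
    {B : Finset (Fin m) // Even B.card} ≃ {B : Finset (Fin m) // ¬ Even B.card} where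
  toFun B := ⟨tog ⟨0, hm⟩ B.1, by
    rw [even_card_tog_iff]
    exact not_not_intro B.2⟩
  invFun B := ⟨tog ⟨0, hm⟩ B.1, by
    rw [even_card_tog_iff]
    exact B.2⟩
  left_inv B := Subtype.ext (tog_tog _ _)
  right_inv B := Subtype.ext (tog_tog _ _)

lemma card_parity (hm : 1 ≤ m) :
    Fintype.card {B : Finset (Fin m) // Even B.card} = 2 ^ (m - 1) ∧
    Fintype.card {B : Finset (Fin m) // ¬ Even B.card} = 2 ^ (m - 1) := by
  have h1 : Fintype.card {B : Finset (Fin m) // Even B.card} =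
      Fintype.card {B : Finset (Fin m) // ¬ Even B.card} :=
    Fintype.card_congr (parityEquiv hm)
  have h2 : Fintype.card {B : Finset (Fin m) // Even B.card} +
      Fintype.card {B : Finset (Fin m) // ¬ Even B.card} = 2 ^ m := by
    rw [← Fintype.card_sum, Fintype.card_congr (Equiv.sumCompl (fun B : Finset (Fin m) => Even B.card))]
    simp [Fintype.card_finset]
  have h3 : 2 ^ m = 2 * 2 ^ (m - 1) := by
    cases m with
    | zero => omega
    | succ n => simp [pow_succ, Nat.succ_sub_one, Nat.mul_comm]
  constructor <;> omega

end MTproof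
namespace MTproof
open MvPolynomial Module

variable {m : ℕ}

lemma mem_Homog {k : ℕ} {P : MixedForm m} :
    P ∈ Homog m k ↔ ∀ B, (P B).IsHomogeneous k := Iff.rfl

lemma mem_DegSupp {S : Set ℕ} {P : MixedForm m} :
    P ∈ DegSupp m S ↔ ∀ B : Finset (Fin m), B.card ∉ S → P B = 0 := Iff.rfl

/-- `D ∘ X` is surjective on homogeneous mixed forms. -/
lemma Dop_Xop_surj (hm : 2 ≤ m) (k : ℕ) (Q : MixedForm m) (hQ : Q ∈ Homog m k) :
    ∃ P, P ∈ Homog m k ∧ Dop m (Xop m P) = Q := by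
  have hmap : ∀ P ∈ Homog m k, Dop m (Xop m P) ∈ Homog m k := by
    intro P hP
    rw [mem_Homog]
    have h1 := Xop_homog (mem_Homog.mp hP)
    have h2 := Dop_homog h1
    simpa using h2
  let φ : ↥(Homog m k) →ₗ[ℝ] ↥(Homog m k) :=
    LinearMap.codRestrict (Homog m k)
      ((Dop m ∘ₗ Xop m).domRestrict (Homog m k)) (fun P => hmap P.1 P.2)
  have hinj : Function.Injective φ := by
    rw [injective_iff_map_eq_zero]
    intro P hP0
    have h0 : Dop m (Xop m (P : MixedForm m)) = 0 := by
      have := congrArg (Subtype.val) hP0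
      exact this
    have hkey := key' k (P : MixedForm m) (mem_Homog.mp P.2)
    rw [h0, zero_add] at hkey
    have hP1 : (P : MixedForm m) = 0 :=
      desc hm k (P : MixedForm m) (mem_Homog.mp P.2) _ (Or.inr le_rfl) hkey
    exact Subtype.ext hP1
  have hsurj := LinearMap.surjective_of_injective hinj
  obtain ⟨P', hP'⟩ := hsurj ⟨Q, hQ⟩
  refine ⟨(P' : MixedForm m), P'.2, ?_⟩
  have := congrArg (Subtype.val) hP'
  exact this

/-- Projection onto even form-degrees. -/
noncomputable def projE (P : MixedForm m) : MixedForm m :=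
  fun B => if Even B.card then P B else 0

lemma Dop_projE_odd (P : MixedForm m) (B : Finset (Fin m)) (hB : ¬ Even B.card) :
    Dop m (projE P) B = Dop m P B := by
  rw [Dop_apply, Dop_apply]
  refine Finset.sum_congr rfl fun i _ => ?_
  have : Even ((tog i B).card) := (even_card_tog_iff i B).mpr hB
  rw [projE, if_pos this]

lemma Dop_projE_even (P : MixedForm m) (B : Finset (Fin m)) (hB : Even B.card) :
    Dop m (projE P) B = 0 := by
  rw [Dop_apply]
  refine Finset.sum_eq_zero fun i _ => ?_
  have : ¬ Even ((tog i B).card) := fun h => ((even_card_tog_iff i B).mp h) hB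
  rw [projE, if_neg this]
  simp

/-- Surjectivity of the Dirac operator from even degree-(k+1) forms onto odd degree-k forms. -/
lemma main_surj (hm : 2 ≤ m) (k : ℕ) (Q : MixedForm m)
    (hQ : Q ∈ Homog m k) (hQodd : ∀ B : Finset (Fin m), Even B.card → Q B = 0) :
    ∃ P, P ∈ Homog m (k + 1) ∧ (∀ B : Finset (Fin m), ¬ Even B.card → P B = 0) ∧
      Dop m P = Q := by
  obtain ⟨P₀, hP₀, hDP₀⟩ := Dop_Xop_surj hm k Q hQ
  refine ⟨projE (Xop m P₀), ?_, ?_, ?_⟩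
  · rw [mem_Homog]
    intro B
    rw [projE]
    split_ifs with h
    · exact Xop_homog (mem_Homog.mp hP₀) B
    · exact isHomogeneous_zero _ _ _
  · intro B hB
    rw [projE, if_neg hB]
  · funext B
    by_cases hB : Even B.card
    · rw [Dop_projE_even _ _ hB, (hQodd B hB).symm]
    · rw [Dop_projE_odd _ _ hB]
      exact congrFun hDP₀ B

/-- The set of even naturals. -/
def Sev : Set ℕ := {t | Even t}
/-- The set of odd naturals. -/
def Sodd : Set ℕ := {t | ¬ Even t}

instance : DecidablePred (· ∈ Sev) := fun t => (inferInstance : Decidable (Even t))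
instance : DecidablePred (· ∈ Sodd) := fun t => (inferInstance : Decidable (¬ Even t))

lemma Dop_maps (k : ℕ) :
    ∀ P ∈ (Homog m (k + 1) ⊓ DegSupp m Sev),
      Dop m P ∈ (Homog m k ⊓ DegSupp m Sodd) := by
  intro P hP
  obtain ⟨hP1, hP2⟩ := Submodule.mem_inf.mp hP
  rw [Submodule.mem_inf]
  constructor
  · rw [mem_Homog]
    have := Dop_homog (mem_Homog.mp hP1)
    simpa using this
  · rw [mem_DegSupp]
    intro B hB
    have hB' : Even B.card := not_not.mp hB
    rw [Dop_apply]
    refine Finset.sum_eq_zero fun i _ => ?_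
    have : ¬ Even ((tog i B).card) := fun h => ((even_card_tog_iff i B).mp h) hB'
    rw [mem_DegSupp.mp hP2 (tog i B) this]
    simp

/-- The restricted Dirac operator. -/
noncomputable def Dres (m k : ℕ) :
    ↥(Homog m (k + 1) ⊓ DegSupp m Sev) →ₗ[ℝ] ↥(Homog m k ⊓ DegSupp m Sodd) :=
  LinearMap.codRestrict _ ((Dop m).domRestrict _) (fun P => Dop_maps k P.1 P.2)

lemma Dres_surj (hm : 2 ≤ m) (k : ℕ) : Function.Surjective (Dres m k) := by
  rintro ⟨Q, hQ⟩
  obtain ⟨hQ1, hQ2⟩ := Submodule.mem_inf.mp hQ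
  obtain ⟨P, hP1, hP2, hP3⟩ := main_surj hm k Q hQ1
    (fun B hB => mem_DegSupp.mp hQ2 B (not_not_intro hB))
  refine ⟨⟨P, Submodule.mem_inf.mpr ⟨hP1, mem_DegSupp.mpr hP2⟩⟩, ?_⟩
  apply Subtype.ext
  exact hP3

lemma finrank_ker_Dres (m k : ℕ) :
    finrank ℝ ↥(LinearMap.ker (Dres m k)) =
      finrank ℝ ↥((Homog m (k + 1) ⊓ DegSupp m Sev) ⊓ LinearMap.ker (Dop m)) := by
  set E := Homog m (k + 1) ⊓ DegSupp m Sev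
  have h1 : LinearMap.ker (Dres m k) = Submodule.comap E.subtype (LinearMap.ker (Dop m)) := by
    unfold Dres
    exact (LinearMap.ker_codRestrict _ _ _).trans (LinearMap.ker_domRestrict _ _)
  have h2 : Submodule.comap E.subtype (LinearMap.ker (Dop m)) =
      Submodule.comap E.subtype (E ⊓ LinearMap.ker (Dop m)) := by
    ext x
    simp [Submodule.mem_comap, Submodule.mem_inf, x.2]
  rw [h1, h2]
  exact (Submodule.comapSubtypeEquivOfLe inf_le_left).finrank_eq

end MTproof
namespace MTproof
open MvPolynomial Module

variable {m : ℕ}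

lemma DegSupp_congr {S S' : Set ℕ}
    (h : ∀ B : Finset (Fin m), B.card ∈ S ↔ B.card ∈ S') :
    DegSupp m S = DegSupp m S' := by
  ext P
  rw [mem_DegSupp, mem_DegSupp]
  constructor <;> intro hP B hB
  · exact hP B (fun hc => hB ((h B).mp hc))
  · exact hP B (fun hc => hB ((h B).mpr hc))

lemma MTsp_eq (m k : ℕ) : MTsp m k 0 0 (m / 2) =
    (Homog m k ⊓ DegSupp m Sev) ⊓ LinearMap.ker (Dop m) := by
  rw [MTsp, extD_coD_eq_Dop]
  congr 2
  apply DegSupp_congr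
  intro B
  have hcard : B.card ≤ m := by
    have := B.card_le_univ
    simpa using this
  simp only [Set.mem_setOf_eq, Sev]
  constructor
  · rintro ⟨j, -, -, hj⟩
    exact ⟨j, by omega⟩
  · rintro ⟨r, hr⟩
    exact ⟨r, by omega, by omega, by omega⟩

lemma card_Sev (hm : 1 ≤ m) :
    Fintype.card {B : Finset (Fin m) // B.card ∈ Sev} = 2 ^ (m - 1) := by
  rw [Fintype.card_congr (Equiv.subtypeEquivRight (p := fun B : Finset (Fin m) => B.card ∈ Sev)
    (q := fun B : Finset (Fin m) => Even B.card) (fun B => Iff.rfl))]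
  exact (card_parity hm).1

lemma card_Sodd (hm : 1 ≤ m) :
    Fintype.card {B : Finset (Fin m) // B.card ∈ Sodd} = 2 ^ (m - 1) := by
  rw [Fintype.card_congr (Equiv.subtypeEquivRight (p := fun B : Finset (Fin m) => B.card ∈ Sodd)
    (q := fun B : Finset (Fin m) => ¬ Even B.card) (fun B => Iff.rfl))]
  exact (card_parity hm).2

lemma finrank_E (hm : 1 ≤ m) (k : ℕ) :
    finrank ℝ ↥(Homog m k ⊓ DegSupp m Sev) = 2 ^ (m - 1) * (m + k - 1).choose k := by
  rw [finrank_split, card_Sev hm]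

lemma finrank_O (hm : 1 ≤ m) (k : ℕ) :
    finrank ℝ ↥(Homog m k ⊓ DegSupp m Sodd) = 2 ^ (m - 1) * (m + k - 1).choose k := by
  rw [finrank_split, card_Sodd hm]

end MTproof

open MTproof in
theorem dim_MT_even' (m k : ℕ) (hm : 2 ≤ m) :
    Module.finrank ℝ (MTsp m k 0 0 (m / 2)) =
      2 ^ (m - 1) * (k + m - 2).choose (m - 2) := by
  have hm1 : 1 ≤ m := by omega
  rw [MTsp_eq]
  cases k with
  | zero =>
    have hker : (Homog m 0 ⊓ DegSupp m Sev) ≤ LinearMap.ker (Dop m) := by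
      intro P hP
      rw [LinearMap.mem_ker]
      funext B
      rw [Dop_apply]
      refine Finset.sum_eq_zero fun i _ => ?_
      rw [pderiv_of_homog_zero i ((mem_Homog.mp (Submodule.mem_inf.mp hP).1) _)]
      simp
    rw [inf_eq_left.mpr hker, finrank_E hm1 0]
    have h1 : (m + 0 - 1).choose 0 = 1 := Nat.choose_zero_right _
    have h2 : (0 + m - 2).choose (m - 2) = 1 := by
      have : 0 + m - 2 = m - 2 := by omega
      rw [this, Nat.choose_self]
    rw [h1, h2]
  | succ k' =>
    have hrn := LinearMap.finrank_range_add_finrank_ker (Dres m k')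
    rw [LinearMap.range_eq_top.mpr (Dres_surj hm k'), finrank_top] at hrn
    rw [← finrank_ker_Dres m k']
    rw [finrank_E hm1 (k' + 1), finrank_O hm1 k'] at hrn
    have hpas : (m + (k' + 1) - 1).choose (k' + 1)
        = (m + k' - 1).choose k' + (m + k' - 1).choose (m - 2) := by
      have h1 : m + (k' + 1) - 1 = (m + k' - 1) + 1 := by omega
      rw [h1, Nat.choose_succ_succ]
      congr 1
      have h2 : (m + k' - 1) - (k' + 1) = m - 2 := by omega
      rw [← h2, Nat.choose_symm (by omega)]
    have h3 : (k' + 1) + m - 2 = m + k' - 1 := by omega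
    rw [h3]
    rw [hpas, Nat.mul_add] at hrn
    omega

theorem dim_MT_even (m k : ℕ) (hm : 2 ≤ m) :
    Module.finrank ℝ (MTsp m k 0 0 (m / 2)) =
      2 ^ (m - 1) * (k + m - 2).choose (m - 2) := by
  exact dim_MT_even' m k hm
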